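/- arXiv:1104.1019 — 2 statements merged into one kernel-verified Lean document; each statement's English description precedes it below -/
import Mathlib

section
/- Let n ≥ p ≥ 2 be integers, q an integer with 1 ≤ q ≤ p/2 - 1, m = ⌊p/2⌋, and suppose the denominators below are positive. Define βᵢ = n/(n+p-2q+1-2i) for 1 ≤ i ≤ m-q, βᵢ = 1 for m-q+1 ≤ i ≤ p-m+q, and βᵢ = n/(n+p+2q+1-2i) for p-m+q+1 ≤ i ≤ p. Then ∑_{i=1}^m (n+p-1-2i)(βᵢ-1) + ∑_{i=m+1}^p (n+p+1-2i)(βᵢ-1) ≤ 0. -/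
lemma aux_pair (N P Q J : ℝ)
    (hd1 : 0 < N + P - 2 * Q + 1 - 2 * J)
    (hd2 : 0 < N + P + 2 * Q + 1 - 2 * (P + 1 - J))
    (hc : 2 * J + 2 * Q ≤ P) (hq : 1 ≤ Q) (hn : 2 ≤ N) :
    (N + P - 1 - 2 * J) * (N / (N + P - 2 * Q + 1 - 2 * J) - 1) +
      (N + P + 1 - 2 * (P + 1 - J)) * (N / (N + P + 2 * Q + 1 - 2 * (P + 1 - J)) - 1) ≤ 0 := by
  set c : ℝ := P - 2 * Q + 1 - 2 * J with hcdef
  have hc1 : 1 ≤ c := by simp [hcdef]; linarith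
  have e : (N + P - 1 - 2 * J) * (N / (N + P - 2 * Q + 1 - 2 * J) - 1) +
      (N + P + 1 - 2 * (P + 1 - J)) * (N / (N + P + 2 * Q + 1 - 2 * (P + 1 - J)) - 1)
      = (c * (2 * N - 4 * Q * N - 2 * c)) /
        ((N + P - 2 * Q + 1 - 2 * J) * (N + P + 2 * Q + 1 - 2 * (P + 1 - J))) := by
    field_simp
    ring
  rw [e]
  apply div_nonpos_of_nonpos_of_nonneg
  · have hqn : N ≤ Q * N := by nlinarith
    have h2 : 2 * N - 4 * Q * N - 2 * c ≤ 0 := by linarith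
    exact mul_nonpos_of_nonneg_of_nonpos (by linarith) h2
  · positivity

/-- Condition (19) for the sequence `β⁽q⁾`. -/
theorem stmt2 (n p q m : ℕ) (hp : 2 ≤ p) (hnp : p ≤ n)
    (hq1 : 1 ≤ q) (hq2 : 2 * q + 2 ≤ p) (hm : m = p / 2)
    (hden1 : ∀ i, 1 ≤ i → i ≤ m - q → (0 : ℝ) < (n : ℝ) + p - 2 * q + 1 - 2 * i)
    (hden2 : ∀ i, p - m + q + 1 ≤ i → i ≤ p → (0 : ℝ) < (n : ℝ) + p + 2 * q + 1 - 2 * i)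
    (β : ℕ → ℝ)
    (hβ1 : ∀ i, 1 ≤ i → i ≤ m - q →
      β i = (n : ℝ) / ((n : ℝ) + p - 2 * q + 1 - 2 * i))
    (hβ2 : ∀ i, m - q + 1 ≤ i → i ≤ p - m + q → β i = 1)
    (hβ3 : ∀ i, p - m + q + 1 ≤ i → i ≤ p →
      β i = (n : ℝ) / ((n : ℝ) + p + 2 * q + 1 - 2 * i)) :
    (∑ i ∈ Finset.Icc 1 m, ((n : ℝ) + p - 1 - 2 * i) * (β i - 1)) +
      (∑ i ∈ Finset.Icc (m + 1) p, ((n : ℝ) + p + 1 - 2 * i) * (β i - 1)) ≤ 0 := by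
  set T1 : ℕ → ℝ := fun i => ((n : ℝ) + p - 1 - 2 * i) * (β i - 1) with hT1
  set T2 : ℕ → ℝ := fun i => ((n : ℝ) + p + 1 - 2 * i) * (β i - 1) with hT2
  have hqm : q + 1 ≤ m := by omega
  have hmp : 2 * m ≤ p := by omega
  have h1 : Finset.Icc 1 m = Finset.Ioc 0 m := Finset.Icc_add_one_left_eq_Ioc 0 m
  have h2 : Finset.Icc (m + 1) p = Finset.Ioc m p := Finset.Icc_add_one_left_eq_Ioc m p
  rw [h1, h2]
  rw [← Finset.sum_Ioc_consecutive T1 (show 0 ≤ m - q by omega) (show m - q ≤ m by omega)]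
  rw [← Finset.sum_Ioc_consecutive T2 (show m ≤ p - m + q by omega)
      (show p - m + q ≤ p by omega)]
  have z1 : ∑ i ∈ Finset.Ioc (m - q) m, T1 i = 0 := by
    apply Finset.sum_eq_zero
    intro i hi
    simp only [Finset.mem_Ioc] at hi
    simp [hT1, hβ2 i (by omega) (by omega)]
  have z2 : ∑ i ∈ Finset.Ioc m (p - m + q), T2 i = 0 := by
    apply Finset.sum_eq_zero
    intro i hi
    simp only [Finset.mem_Ioc] at hi
    simp [hT2, hβ2 i (by omega) (by omega)]
  rw [z1, z2]
  have e3 : ∑ i ∈ Finset.Ioc (p - m + q) p, T2 i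
      = ∑ j ∈ Finset.Ioc 0 (m - q), T2 (p + 1 - j) := by
    apply Finset.sum_nbij' (fun i => p + 1 - i) (fun j => p + 1 - j)
    · intro a ha; simp only [Finset.mem_Ioc] at *; omega
    · intro a ha; simp only [Finset.mem_Ioc] at *; omega
    · intro a ha; simp only [Finset.mem_Ioc] at ha; omega
    · intro a ha; simp only [Finset.mem_Ioc] at ha; omega
    · intro a ha; simp only [Finset.mem_Ioc] at ha
      congr 1; omega
  rw [e3]
  have : (∑ i ∈ Finset.Ioc 0 (m - q), T1 i) + 0 +
      ((0 : ℝ) + ∑ j ∈ Finset.Ioc 0 (m - q), T2 (p + 1 - j))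
      = ∑ j ∈ Finset.Ioc 0 (m - q), (T1 j + T2 (p + 1 - j)) := by
    rw [Finset.sum_add_distrib]; ring
  rw [this]
  apply Finset.sum_nonpos
  intro j hj
  simp only [Finset.mem_Ioc] at hj
  obtain ⟨hj1, hj2⟩ := hj
  have hd1 := hden1 j hj1 hj2
  have hi1 : p - m + q + 1 ≤ p + 1 - j := by omega
  have hi2 : p + 1 - j ≤ p := by omega
  have hd2 := hden2 _ hi1 hi2
  have hcast : ((p + 1 - j : ℕ) : ℝ) = (p : ℝ) + 1 - j := by
    have hjp : j ≤ p + 1 := by omega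
    push_cast [Nat.cast_sub hjp]; ring
  simp only [hT1, hT2, hβ1 j hj1 hj2, hβ3 _ hi1 hi2, hcast]
  rw [hcast] at hd2
  have hc : 2 * (j : ℝ) + 2 * q ≤ p := by
    have : 2 * j + 2 * q ≤ p := by omega
    exact_mod_cast this
  have hq : (1 : ℝ) ≤ q := by exact_mod_cast hq1
  have hn : (2 : ℝ) ≤ n := by
    have : 2 ≤ n := by omega
    exact_mod_cast this
  exact aux_pair n p q j hd1 hd2 hc hq hn
end

section
/- Let β₁ ≤ ⋯ ≤ β_p be reals with βᵢ ≤ 1 for i ≤ m and βᵢ ≥ 1 for i > m (1 ≤ m ≤ p−1), satisfying ∑_{i=1}^m (n+p−1−2i)(βᵢ−1) + ∑_{i=m+1}^p (n+p+1−2i)(βᵢ−1) ≤ 0 and ∑_{i=1}^p βᵢ⁻¹ ≤ p, with all βᵢ > 0. Then for any l₁ > ⋯ > l_p > 0 and dᵢ = lᵢ/∑ⱼlⱼ: (∑ⱼlⱼ)⁻¹[2∑_{i<j}(βᵢ−βⱼ)lⱼ/(lᵢ−lⱼ) + ∑ᵢ(n+p+1−2i−2dᵢ)(βᵢ−1)]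 − log∏ᵢβᵢ ≤ 0. -/
/-!
The first sum is termwise nonpositive, since `β` increases while `l` decreases. Because
`0 ≤ dᵢ ≤ 1`, the second sum is bounded by the left-hand side of the second condition: the
`-2dᵢ` is at most `-2` against `βᵢ - 1 ≤ 0` and at most `0` against `βᵢ - 1 ≥ 0`. Finally
`log βᵢ ≥ 1 - βᵢ⁻¹`, so the third condition makes `log ∏ βᵢ` nonnegative.
-/

open Finset

lemma sum_Icc_add_sum_Icc_succ (f : ℕ → ℝ) {a m b : ℕ} (ham : a ≤ m + 1) (hmb : m ≤ b) :
    ∑ i ∈ Icc a m, f i + ∑ i ∈ Icc (m + 1) b, f i = ∑ i ∈ Icc a b, f i := by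
  simp only [← Ico_add_one_right_eq_Icc]
  exact sum_Ico_consecutive f ham (by omega)

lemma div_sum_mem_Icc {ι : Type*} {s : Finset ι} {f : ι → ℝ} (hf : ∀ j ∈ s, 0 ≤ f j)
    {i : ι} (hi : i ∈ s) : f i / ∑ j ∈ s, f j ∈ Set.Icc 0 1 :=
  ⟨div_nonneg (hf i hi) (sum_nonneg hf), div_le_one_of_le₀ (single_le_sum hf hi) (sum_nonneg hf)⟩

lemma log_prod_nonneg_of_sum_inv_le_card {ι : Type*} {s : Finset ι} {β : ι → ℝ}
    (hβ : ∀ i ∈ s, 0 < β i) (h : ∑ i ∈ s, (β i)⁻¹ ≤ #s) : 0 ≤ Real.log (∏ i ∈ s, β i) := by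
  rw [Real.log_prod fun i hi => (hβ i hi).ne']
  calc (0 : ℝ) ≤ ∑ i ∈ s, (1 - (β i)⁻¹) := by simpa [sum_sub_distrib] using h
    _ ≤ ∑ i ∈ s, Real.log (β i) :=
      sum_le_sum fun i hi => Real.one_sub_inv_le_log_of_pos (hβ i hi)

lemma sum_sum_sub_mul_div_sub_nonpos {a b : ℕ} {β l : ℕ → ℝ} (hβ : MonotoneOn β (Set.Icc a b))
    (hl : StrictAntiOn l (Set.Icc a b)) (hl₀ : ∀ i ∈ Icc a b, 0 ≤ l i) :
    ∑ i ∈ Icc a b, ∑ j ∈ Icc (i + 1) b, (β i - β j) * l j / (l i - l j) ≤ 0 := by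
  refine sum_nonpos fun i hi => sum_nonpos fun j hj => ?_
  simp only [mem_Icc] at hi hj
  have hj' : j ∈ Set.Icc a b := ⟨by omega, hj.2⟩
  have hij : i < j := by omega
  refine div_nonpos_of_nonpos_of_nonneg ?_ (sub_nonneg.2 (hl hi hj' hij).le)
  exact mul_nonpos_of_nonpos_of_nonneg (sub_nonpos.2 (hβ hi hj' hij.le)) (hl₀ j (mem_Icc.2 hj'))

lemma sum_sub_two_mul_mul_sub_one_le {m p : ℕ} (hmp : m ≤ p) {c d β : ℕ → ℝ}
    (hd : ∀ i ∈ Icc 1 p, d i ∈ Set.Icc 0 1)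
    (hβle : ∀ i ∈ Icc 1 m, β i ≤ 1) (hβge : ∀ i ∈ Icc (m + 1) p, 1 ≤ β i) :
    ∑ i ∈ Icc 1 p, (c i - 2 * d i) * (β i - 1) ≤
      ∑ i ∈ Icc 1 m, (c i - 2) * (β i - 1) + ∑ i ∈ Icc (m + 1) p, c i * (β i - 1) := by
  rw [← sum_Icc_add_sum_Icc_succ _ (by omega) hmp]
  refine add_le_add (sum_le_sum fun i hi => ?_) (sum_le_sum fun i hi => ?_)
  · have hdi := (hd i (Icc_subset_Icc_right hmp hi)).2
    nlinarith [hβle i hi]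
  · have hdi := (hd i (Icc_subset_Icc_left (by omega) hi)).1
    nlinarith [hβge i hi]

theorem stmt17_general (n p m : ℕ)
    (hm2 : m ≤ p - 1)
    (β : ℕ → ℝ)
    (hβpos : ∀ i ∈ Finset.Icc 1 p, 0 < β i)
    (hβmono : ∀ i j, 1 ≤ i → i ≤ j → j ≤ p → β i ≤ β j)
    (hβle : ∀ i ∈ Finset.Icc 1 m, β i ≤ 1)
    (hβge : ∀ i ∈ Finset.Icc (m + 1) p, 1 ≤ β i)
    (hcond2 : (∑ i ∈ Finset.Icc 1 m, ((n : ℝ) + p - 1 - 2 * i) * (β i - 1)) +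
        (∑ i ∈ Finset.Icc (m + 1) p, ((n : ℝ) + p + 1 - 2 * i) * (β i - 1)) ≤ 0)
    (hcond3 : ∑ i ∈ Finset.Icc 1 p, (β i)⁻¹ ≤ (p : ℝ))
    (l d : ℕ → ℝ)
    (hl : ∀ i j, 1 ≤ i → i < j → j ≤ p → l j < l i)
    (hlpos : ∀ i ∈ Finset.Icc 1 p, 0 < l i)
    (hd : ∀ i, d i = l i / ∑ j ∈ Finset.Icc 1 p, l j) :
    (∑ j ∈ Finset.Icc 1 p, l j)⁻¹ *
        (2 * ∑ i ∈ Finset.Icc 1 p, ∑ j ∈ Finset.Icc (i + 1) p,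
            (β i - β j) * l j / (l i - l j)
          + ∑ i ∈ Finset.Icc 1 p, ((n : ℝ) + p + 1 - 2 * i - 2 * d i) * (β i - 1))
      - Real.log (∏ i ∈ Finset.Icc 1 p, β i) ≤ 0 := by
  have hcross := sum_sum_sub_mul_div_sub_nonpos (β := β)
    (fun i hi j hj hij => hβmono i j hi.1 hij hj.2) (fun i hi j hj hij => hl i j hi.1 hij hj.2)
    fun i hi => (hlpos i hi).le
  have hlinear := sum_sub_two_mul_mul_sub_one_le (c := fun i => (n : ℝ) + p + 1 - 2 * i)
    (by omega) (fun i hi => hd i ▸ div_sum_mem_Icc (fun j hj => (hlpos j hj).le) hi) hβle hβge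
  have hshift : ∑ i ∈ Icc 1 m, ((n : ℝ) + p + 1 - 2 * i - 2) * (β i - 1) =
      ∑ i ∈ Icc 1 m, ((n : ℝ) + p - 1 - 2 * i) * (β i - 1) :=
    sum_congr rfl fun i _ => by ring
  have hlog := log_prod_nonneg_of_sum_inv_le_card hβpos (by simpa using hcond3)
  have hfactor := inv_nonneg.2 (sum_nonneg fun j hj => (hlpos j hj).le)
  nlinarith

/-- Pointwise inequality underlying the dominance result (Theorem 2): under the
three conditions on `β`, the risk-difference integrand is nonpositive. -/
theorem stmt17 (n p m : ℕ) (hp : 2 ≤ p) (hnp : p ≤ n)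
    (hm1 : 1 ≤ m) (hm2 : m ≤ p - 1)
    (β : ℕ → ℝ)
    (hβpos : ∀ i ∈ Finset.Icc 1 p, 0 < β i)
    (hβmono : ∀ i j, 1 ≤ i → i ≤ j → j ≤ p → β i ≤ β j)
    (hβle : ∀ i ∈ Finset.Icc 1 m, β i ≤ 1)
    (hβge : ∀ i ∈ Finset.Icc (m + 1) p, 1 ≤ β i)
    (hcond2 : (∑ i ∈ Finset.Icc 1 m, ((n : ℝ) + p - 1 - 2 * i) * (β i - 1)) +
        (∑ i ∈ Finset.Icc (m + 1) p, ((n : ℝ) + p + 1 - 2 * i) * (β i - 1)) ≤ 0)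
    (hcond3 : ∑ i ∈ Finset.Icc 1 p, (β i)⁻¹ ≤ (p : ℝ))
    (l d : ℕ → ℝ)
    (hl : ∀ i j, 1 ≤ i → i < j → j ≤ p → l j < l i)
    (hlpos : ∀ i ∈ Finset.Icc 1 p, 0 < l i)
    (hd : ∀ i, d i = l i / ∑ j ∈ Finset.Icc 1 p, l j) :
    (∑ j ∈ Finset.Icc 1 p, l j)⁻¹ *
        (2 * ∑ i ∈ Finset.Icc 1 p, ∑ j ∈ Finset.Icc (i + 1) p,
            (β i - β j) * l j / (l i - l j)
          + ∑ i ∈ Finset.Icc 1 p, ((n : ℝ) + p + 1 - 2 * i - 2 * d i) * (β i - 1))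
      - Real.log (∏ i ∈ Finset.Icc 1 p, β i) ≤ 0 :=
  stmt17_general n p m hm2 β hβpos hβmono hβle hβge hcond2 hcond3 l d hl hlpos hd
end
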